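/- (Linear pointwise decay estimate) There is an absolute constant C such that for every f : ℝ → ℂ with ⟨x⟩f ∈ L²(ℝ) and every t ≥ 1, ‖e^{itΔ}f‖_{L^∞} ≤ C t^{-1/2} ( ‖𝓕f‖_{L^∞} + t^{-1/20} ‖⟨x⟩f‖_{L²} ). -/

import Mathlib

open MeasureTheory Complex
open scoped ENNReal

noncomputable section

/-- The Fourier transform with the paper's convention:
`𝓕f(ξ) = (2π)^{-1/2} ∫ e^{ixξ} f(x) dx`. -/
def FT (f : ℝ → ℂ) (ξ : ℝ) : ℂ :=
  ((2 * Real.pi) ^ (-(1 : ℝ)/2)) • ∫ x : ℝ, Complex.exp (Complex.I * x * ξ) * f x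

/-- The inverse Fourier transform: `𝓕⁻¹f(x) = (2π)^{-1/2} ∫ e^{-ixξ} f(ξ) dξ`. -/
def FTinv (f : ℝ → ℂ) (x : ℝ) : ℂ :=
  ((2 * Real.pi) ^ (-(1 : ℝ)/2)) • ∫ ξ : ℝ, Complex.exp (-(Complex.I * x * ξ)) * f ξ

/-- The free Schrödinger propagator `e^{itΔ} = 𝓕⁻¹ e^{-itξ²} 𝓕`. -/
def schrod (t : ℝ) (f : ℝ → ℂ) : ℝ → ℂ :=
  FTinv fun ξ => Complex.exp (-(Complex.I * t * ξ ^ 2)) * FT f ξ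

/-- The `L^p` norm of a function on `ℝ`, as a real number. -/
def Lnorm (p : ℝ≥0∞) (f : ℝ → ℂ) : ℝ := (eLpNorm f p volume).toReal

/-- The operator `⟨∂_x⟩ = 𝓕⁻¹⟨ξ⟩𝓕`. -/
def jder (f : ℝ → ℂ) : ℝ → ℂ :=
  FTinv fun ξ => (Real.sqrt (1 + ξ ^ 2) : ℂ) * FT f ξ

/-- The `H^{1,1}` norm: `‖⟨∂_x⟩u‖_{L²} + ‖xu‖_{L²}`. -/
def H11norm (f : ℝ → ℂ) : ℝ :=
  Lnorm 2 (jder f) + Lnorm 2 (fun x : ℝ => (x : ℂ) * f x)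

/-- Membership in `H^{1,1}`. -/
def MemH11 (f : ℝ → ℂ) : Prop :=
  MemLp (jder f) 2 (volume : Measure ℝ) ∧
    MemLp (fun x : ℝ => (x : ℂ) * f x) 2 (volume : Measure ℝ)

/-- The Galilean operator `J(t) = x + 2it∂_x`. -/
def galilean (t : ℝ) (f : ℝ → ℂ) : ℝ → ℂ :=
  fun x : ℝ => (x : ℂ) * f x + 2 * Complex.I * (t : ℂ) * deriv f x

/-- The piecewise-constant dispersion profile `d`. -/
def dmDisp (dp dm tp : ℝ) (t : ℝ) : ℝ := if t < tp then dp else -dm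

/-- `D(τ) = ∫_0^τ (d(σ) - 1) dσ`. -/
def dmD (dp dm tp : ℝ) (τ : ℝ) : ℝ := ∫ σ in (0:ℝ)..τ, (dmDisp dp dm tp σ - 1)

/-- The cubic nonlinearity conjugated by the propagator:
`e^{-iaΔ}( |e^{iaΔ}f|² e^{iaΔ}f )`. -/
def dmNonlin (a : ℝ) (f : ℝ → ℂ) : ℝ → ℂ :=
  schrod (-a) fun y => (‖schrod a f y‖ : ℂ) ^ 2 * schrod a f y

/-- `u` solves the averaged dispersion-managed cubic NLS
`i∂_t u + ∂_{xx} u = ∫_0^1 e^{-iD(τ)Δ}[|e^{iD(τ)Δ}u|² e^{iD(τ)Δ}u] dτ` for times in `s`. -/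
def IsDMSol (D : ℝ → ℝ) (u : ℝ → ℝ → ℂ) (s : Set ℝ) : Prop :=
  ∀ t ∈ s, ∀ x : ℝ,
    Complex.I * deriv (fun t' => u t' x) t + deriv (deriv (u t)) x
      = ∫ τ in (0:ℝ)..1, dmNonlin (D τ) (u t) x

/-- The profile `f(t) = e^{-itΔ}u(t)`. -/
def dmProfile (u : ℝ → ℝ → ℂ) (t : ℝ) : ℝ → ℂ := schrod (-t) (u t)

/-- The dispersive norm `‖u(t)‖_{X_D} = ‖𝓕f(t)‖_{L^∞}`. -/
def XD (u : ℝ → ℝ → ℂ) (t : ℝ) : ℝ := Lnorm ⊤ (FT (dmProfile u t))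

/-- The energy norm `‖u(t)‖_{X_E} = t^{-1/20}(‖⟨∂_x⟩u(t)‖_{L²} + ‖J(t)u(t)‖_{L²})`. -/
def XE (u : ℝ → ℝ → ℂ) (t : ℝ) : ℝ :=
  t ^ (-(1 : ℝ)/20) * (Lnorm 2 (jder (u t)) + Lnorm 2 (galilean t (u t)))

/-- `‖u‖_X = sup_{s ∈ [1,T]} (‖u(s)‖_{X_D} + ‖u(s)‖_{X_E})`. -/
def Xnorm (u : ℝ → ℝ → ℂ) (T : ℝ) : ℝ :=
  sSup ((fun s => XD u s + XE u s) '' Set.Icc 1 T)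

/-- Continuity in time with values in `H^{1,1}`. -/
def ContH11On (u : ℝ → ℝ → ℂ) (s : Set ℝ) : Prop :=
  ∀ t ∈ s, MemH11 (u t) ∧
    Filter.Tendsto (fun t' => H11norm fun x => u t' x - u t x)
      (nhdsWithin t s) (nhds 0)

/-- Continuity in time with values in `H^1`. -/
def ContH1On (u : ℝ → ℝ → ℂ) (s : Set ℝ) : Prop :=
  ∀ t ∈ s, MemLp (jder (u t)) 2 (volume : Measure ℝ) ∧
    Filter.Tendsto (fun t' => Lnorm 2 (jder fun x => u t' x - u t x))
      (nhdsWithin t s) (nhds 0)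

/-- The phase `Θ(t,ξ)`. -/
def dmTheta (D : ℝ → ℝ) (u : ℝ → ℝ → ℂ) (t ξ : ℝ) : ℝ :=
  ∫ s in (1:ℝ)..t, ∫ τ in (0:ℝ)..1,
    (2 * (s + D τ))⁻¹ * ‖FT (dmProfile u s) ξ‖ ^ 2

/-- The modified profile `g(t,ξ) = e^{iΘ(t,ξ)} 𝓕f(t,ξ)`. -/
def dmG (D : ℝ → ℝ) (u : ℝ → ℝ → ℂ) (t ξ : ℝ) : ℂ :=
  Complex.exp (Complex.I * dmTheta D u t ξ) * FT (dmProfile u t) ξ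


/-!
When `𝓕f` is integrable, damping the `ξ`-integral by `e^{-εξ²}`, exchanging the integrals and
using the Fourier transform of a Gaussian gives, as `ε → 0`, the Fresnel representation
`e^{itΔ}f(x) = (2π)⁻¹ (π/(it))^{1/2} ∫ e^{i(x-y)²/(4t)} f(y) dy`.
Expanding `(x-y)²`, the phase `e^{-ixy/(2t)}` integrates against `f` to a multiple of
`𝓕f(-x/(2t))`, while the remaining factor obeys `|e^{iy²/(4t)} - 1| ≤ 2 |y²/(4t)|^α`.
For `α < 1/4` the weight `|y|^{2α}/⟨y⟩` is square integrable, so Cauchy–Schwarz bounds that part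
by `t^{-α} ‖⟨x⟩f‖_{L²}`.
-/

open Filter Topology
open scoped Real

lemma norm_cexp_I_mul_sub_one_le_rpow {α : ℝ} (hα0 : 0 ≤ α) (hα1 : α ≤ 1) (θ : ℝ) :
    ‖cexp (I * θ) - 1‖ ≤ 2 * |θ| ^ α := by
  rcases le_total |θ| 1 with h | h
  · calc ‖cexp (I * θ) - 1‖ ≤ |θ| := Real.norm_exp_I_mul_ofReal_sub_one_le
      _ ≤ |θ| ^ α := by simpa using Real.rpow_le_rpow_of_exponent_ge' (abs_nonneg θ) h hα0 hα1
      _ ≤ 2 * |θ| ^ α := by linarith [Real.rpow_nonneg (abs_nonneg θ) α]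
  · calc ‖cexp (I * θ) - 1‖ ≤ ‖cexp (I * θ)‖ + ‖(1:ℂ)‖ := norm_sub_le _ _
      _ = 2 * 1 := by rw [norm_exp_I_mul_ofReal, norm_one]; norm_num
      _ ≤ 2 * |θ| ^ α := by gcongr; exact Real.one_le_rpow h hα0

lemma rpow_abs_div_sqrt_smul_sqrt_mul (a : ℝ) (f : ℝ → ℂ) :
    (fun y : ℝ => |y| ^ a / √(1 + y ^ 2)) • (fun x : ℝ => (√(1 + x ^ 2) : ℂ) * f x)
      = fun y => (|y| ^ a : ℝ) • f y := by
  ext y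
  have : (√(1 + y ^ 2) : ℂ) ≠ 0 := ofReal_ne_zero.2 (by positivity)
  simp only [Pi.smul_apply', real_smul, ofReal_div]
  field_simp

lemma norm_rpow_abs_smul (a y : ℝ) (z : ℂ) : ‖(|y| ^ a : ℝ) • z‖ = |y| ^ a * ‖z‖ := by
  rw [norm_smul, Real.norm_of_nonneg (by positivity)]

section Weights

variable {a : ℝ} {f : ℝ → ℂ}

lemma memLp_two_rpow_abs_div_sqrt_one_add_sq (ha0 : 0 ≤ a) (ha : a < 1/2) :
    MemLp (fun y : ℝ => |y| ^ a / √(1 + y ^ 2)) 2 volume := by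
  have hmeas : AEStronglyMeasurable (fun y : ℝ => |y| ^ a / √(1 + y ^ 2)) volume :=
    (by fun_prop : Measurable fun y : ℝ => |y| ^ a / √(1 + y ^ 2)).aestronglyMeasurable
  rw [memLp_two_iff_integrable_sq hmeas]
  have hmaj : Integrable (fun y : ℝ => (1 + ‖y‖ ^ 2) ^ (-(2 - 2 * a) / 2)) volume :=
    integrable_rpow_neg_one_add_norm_sq (by simp; linarith)
  refine hmaj.mono' (hmeas.pow 2) (ae_of_all _ fun y => ?_)
  have hpos : 0 < 1 + y ^ 2 := by positivity
  calc ‖(|y| ^ a / √(1 + y ^ 2)) ^ 2‖ = (y ^ 2) ^ a / (1 + y ^ 2) := by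
        rw [Real.norm_of_nonneg (by positivity), div_pow, Real.rpow_pow_comm (abs_nonneg y),
          sq_abs, Real.sq_sqrt hpos.le]
    _ ≤ (1 + y ^ 2) ^ a / (1 + y ^ 2) := by gcongr; linarith
    _ = (1 + ‖y‖ ^ 2) ^ (-(2 - 2 * a) / 2) := by
        rw [Real.norm_eq_abs, sq_abs, ← Real.rpow_sub_one hpos.ne']
        ring_nf

lemma memLp_one_rpow_abs_smul
    (hf : MemLp (fun x : ℝ => (√(1 + x ^ 2) : ℂ) * f x) 2 volume) (ha0 : 0 ≤ a) (ha : a < 1/2) :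
    MemLp (fun y => (|y| ^ a : ℝ) • f y) 1 volume :=
  rpow_abs_div_sqrt_smul_sqrt_mul a f ▸ hf.smul (memLp_two_rpow_abs_div_sqrt_one_add_sq ha0 ha)

lemma integrable_of_memLp_sqrt_one_add_sq_mul
    (hf : MemLp (fun x : ℝ => (√(1 + x ^ 2) : ℂ) * f x) 2 volume) : Integrable f := by
  simpa using memLp_one_iff_integrable.1 (memLp_one_rpow_abs_smul (a := 0) hf le_rfl (by norm_num))

lemma integrable_rpow_abs_mul_norm
    (hf : MemLp (fun x : ℝ => (√(1 + x ^ 2) : ℂ) * f x) 2 volume) (ha0 : 0 ≤ a) (ha : a < 1/2) :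
    Integrable fun y => |y| ^ a * ‖f y‖ := by
  simpa only [norm_rpow_abs_smul] using
    (memLp_one_iff_integrable.1 (memLp_one_rpow_abs_smul hf ha0 ha)).norm

lemma integral_rpow_abs_mul_norm_le
    (hf : MemLp (fun x : ℝ => (√(1 + x ^ 2) : ℂ) * f x) 2 volume) (ha0 : 0 ≤ a) (ha : a < 1/2) :
    ∫ y, |y| ^ a * ‖f y‖ ≤ (eLpNorm (fun y : ℝ => |y| ^ a / √(1 + y ^ 2)) 2 volume).toReal *
      Lnorm 2 (fun x : ℝ => (√(1 + x ^ 2) : ℂ) * f x) := by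
  have hw := memLp_two_rpow_abs_div_sqrt_one_add_sq ha0 ha
  calc ∫ y, |y| ^ a * ‖f y‖ = ∫ y, ‖(|y| ^ a : ℝ) • f y‖ := by simp only [norm_rpow_abs_smul]
    _ = (eLpNorm (fun y => (|y| ^ a : ℝ) • f y) 1 volume).toReal := by
        rw [integral_norm_eq_lintegral_enorm (memLp_one_rpow_abs_smul hf ha0 ha).1,
          eLpNorm_one_eq_lintegral_enorm]
    _ ≤ _ := by
        rw [← rpow_abs_div_sqrt_smul_sqrt_mul, Lnorm, ← ENNReal.toReal_mul]
        exact ENNReal.toReal_mono (ENNReal.mul_ne_top hw.eLpNorm_ne_top hf.eLpNorm_ne_top)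
          (eLpNorm_smul_le_mul_eLpNorm hf.1 hw.1)

end Weights

lemma norm_le_Lnorm_top_of_continuous {g : ℝ → ℂ} (hg : Continuous g)
    (hfin : eLpNorm g ⊤ volume ≠ ⊤) (x : ℝ) : ‖g x‖ ≤ Lnorm ⊤ g := by
  have hae : ∀ᵐ y ∂volume, ‖g y‖ ≤ Lnorm ⊤ g := by
    filter_upwards [enorm_ae_le_eLpNormEssSup g volume] with y hy
    rw [Lnorm, eLpNorm_exponent_top]
    exact ENNReal.toReal_mono (eLpNorm_exponent_top (f := g) ▸ hfin) hy
  have hclosed : IsClosed {y | ‖g y‖ ≤ Lnorm ⊤ g} := isClosed_le hg.norm continuous_const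
  exact Set.eq_univ_iff_forall.1
    (hclosed.closure_eq.symm.trans (Measure.dense_of_ae hae).closure_eq) x

lemma Lnorm_top_le_of_forall_norm_le {g : ℝ → ℂ} {R : ℝ} (hR : 0 ≤ R) (h : ∀ x, ‖g x‖ ≤ R) :
    Lnorm ⊤ g ≤ R :=
  ENNReal.toReal_le_of_le_ofReal hR
    (by rw [eLpNorm_exponent_top]; exact eLpNormEssSup_le_of_ae_bound (ae_of_all _ h))

lemma FT_apply (f : ℝ → ℂ) (ξ : ℝ) :
    FT f ξ = (2 * π) ^ (-(1:ℝ)/2) • ∫ y : ℝ, cexp (I * y * ξ) * f y := rfl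

lemma norm_FT_le (f : ℝ → ℂ) (ξ : ℝ) : ‖FT f ξ‖ ≤ (2 * π) ^ (-(1:ℝ)/2) * ∫ y, ‖f y‖ := by
  rw [FT_apply, norm_smul, Real.norm_of_nonneg (by positivity)]
  gcongr
  refine (norm_integral_le_integral_norm _).trans_eq (integral_congr_ae (ae_of_all _ fun y => ?_))
  simp [norm_exp]

lemma continuous_FT {f : ℝ → ℂ} (hf : Integrable f) : Continuous (FT f) :=
  (continuous_of_dominated (F := fun (ξ y : ℝ) => cexp (I * y * ξ) * f y)
    (bound := fun y => ‖f y‖) (fun ξ =>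
      ((by fun_prop : Continuous fun y : ℝ => cexp (I * y * ξ)).aestronglyMeasurable.mul hf.1))
    (fun ξ => ae_of_all _ fun y => by simp [norm_exp])
    hf.norm (ae_of_all _ fun y => by fun_prop)).const_smul ((2 * π) ^ (-(1:ℝ)/2))

lemma norm_FT_le_Lnorm_top {f : ℝ → ℂ} (hf : Integrable f) (ξ : ℝ) :
    ‖FT f ξ‖ ≤ Lnorm ⊤ (FT f) :=
  norm_le_Lnorm_top_of_continuous (continuous_FT hf)
    (memLp_top_of_bound (continuous_FT hf).aestronglyMeasurable _
      (ae_of_all _ (norm_FT_le f))).eLpNorm_ne_top ξ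

lemma integral_cexp_neg_mul_sq_mul_FT {f : ℝ → ℂ} (hf : Integrable f) {b : ℂ} (hb : 0 < b.re)
    (x : ℝ) :
    ∫ ξ : ℝ, cexp (-b * ξ ^ 2) * (cexp (-(I * x * ξ)) * FT f ξ)
      = (2 * π) ^ (-(1:ℝ)/2) •
          ((π / b) ^ (1/2 : ℂ) * ∫ y : ℝ, cexp (-((y:ℂ) - x) ^ 2 / (4 * b)) * f y) := by
  have hprod : Integrable (Function.uncurry fun (ξ y : ℝ) =>
      cexp (I * (y - x) * ξ) * cexp (-b * ξ ^ 2) * f y) (volume.prod volume) := by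
    refine (((integrable_cexp_neg_mul_sq hb).mul_prod hf).bdd_mul (c := 1)
      (f := fun z : ℝ × ℝ => cexp (I * ((z.2 - x) * z.1 : ℝ)))
      (by fun_prop) (ae_of_all _ fun z => (norm_exp_I_mul_ofReal _).le)).congr
      (ae_of_all _ fun ⟨ξ, y⟩ => ?_)
    simp [mul_assoc]
  calc ∫ ξ : ℝ, cexp (-b * ξ ^ 2) * (cexp (-(I * x * ξ)) * FT f ξ)
      = (2 * π) ^ (-(1:ℝ)/2) • ∫ ξ : ℝ, ∫ y : ℝ,
          cexp (I * (y - x) * ξ) * cexp (-b * ξ ^ 2) * f y := by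
        rw [← integral_smul]
        refine integral_congr_ae (ae_of_all _ fun ξ => ?_)
        simp only [FT_apply, mul_smul_comm, ← integral_const_mul]
        congr 2 with y
        rw [show I * (y - x) * ξ = -(I * x * ξ) + I * y * ξ by ring, Complex.exp_add]
        ring
    _ = _ := by
        rw [integral_integral_swap hprod, ← integral_const_mul]
        refine congrArg _ (integral_congr_ae (ae_of_all _ fun y => ?_))
        simp only
        rw [integral_mul_const, fourierIntegral_gaussian hb, ← mul_assoc]

lemma norm_cexp_neg_sq_div_le_one {b : ℂ} (hb : 0 ≤ b.re) (r : ℝ) :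
    ‖cexp (-(r:ℂ) ^ 2 / (4 * b))‖ ≤ 1 := by
  rw [norm_exp, Real.exp_le_one_iff, div_re]
  simp only [← ofReal_pow, neg_re, ofReal_re, mul_re, re_ofNat, im_ofNat, zero_mul, sub_zero,
    neg_mul, map_mul, normSq_ofNat, neg_im, ofReal_im, neg_zero, mul_im, add_zero, zero_div]
  exact div_nonpos_of_nonpos_of_nonneg (neg_nonpos.2 (mul_nonneg (sq_nonneg r) (by linarith)))
    (mul_nonneg (by norm_num) (normSq_nonneg b))

lemma continuousOn_integral_cexp_neg_sq_div_mul {f : ℝ → ℂ} (hf : Integrable f) (x : ℝ) :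
    ContinuousOn (fun b : ℂ => ∫ y : ℝ, cexp (-((y:ℂ) - x) ^ 2 / (4 * b)) * f y)
      {b | 0 ≤ b.re ∧ b ≠ 0} := by
  refine continuousOn_of_dominated (bound := fun y => ‖f y‖)
    (fun b _ => ((by fun_prop : Continuous fun y : ℝ =>
      cexp (-((y:ℂ) - x) ^ 2 / (4 * b))).aestronglyMeasurable.mul hf.1))
    (fun b hb => ae_of_all _ fun y => ?_) hf.norm (ae_of_all _ fun y => ?_)
  · rw [norm_mul]
    have := norm_cexp_neg_sq_div_le_one hb.1 (y - x)
    push_cast at this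
    exact mul_le_of_le_one_left (norm_nonneg _) this
  · refine ContinuousOn.mul ?_ continuousOn_const
    refine ContinuousOn.cexp (ContinuousOn.div continuousOn_const (by fun_prop) fun b hb => ?_)
    exact mul_ne_zero (by norm_num) hb.2

theorem schrod_apply_eq_integral_fresnel {f : ℝ → ℂ} (hf : Integrable f)
    (hFf : Integrable (FT f)) {t : ℝ} (ht : t ≠ 0) (x : ℝ) :
    schrod t f x = (2 * π) ^ (-(1:ℝ)/2) • (2 * π) ^ (-(1:ℝ)/2) •
      ((π / (I * t)) ^ (1/2 : ℂ) * ∫ y : ℝ, cexp (-((y:ℂ) - x) ^ 2 / (4 * (I * t))) * f y) := by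
  set H : Set ℂ := {b | 0 ≤ b.re ∧ b ≠ 0}
  set Φ : ℂ → ℂ := fun b =>
    (π / b) ^ (1/2 : ℂ) * ∫ y : ℝ, cexp (-((y:ℂ) - x) ^ 2 / (4 * b)) * f y
  set G : ℝ → ℂ := fun ξ => cexp (-(I * x * ξ)) * (cexp (-(I * t * ξ ^ 2)) * FT f ξ)
  have hG : Integrable G :=
    (hFf.bdd_mul (c := 1) (f := fun ξ : ℝ => cexp (-(I * x * ξ)) * cexp (-(I * t * ξ ^ 2)))
      (by fun_prop) (ae_of_all _ fun ξ => by simp [norm_exp, ← ofReal_pow])).congr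
      (ae_of_all _ fun ξ => by simp only [G, mul_assoc])
  have hIt : I * (t:ℂ) ≠ 0 := mul_ne_zero I_ne_zero (ofReal_ne_zero.2 ht)
  have hslit : (π : ℂ) / (I * t) ∈ slitPlane :=
    mem_slitPlane_iff.2 (Or.inr (by simp [div_im, ht, Real.pi_ne_zero]))
  have hΦ : ContinuousWithinAt Φ H (I * t) :=
    ((continuousAt_cpow_const hslit).comp (continuousAt_const.div continuousAt_id hIt)
      ).continuousWithinAt.mul (continuousOn_integral_cexp_neg_sq_div_mul hf x _ ⟨by simp, hIt⟩)
  have hb : Tendsto (fun s : ℝ => ((s⁻¹ : ℝ) : ℂ) + I * t) atTop (𝓝[H] (I * t)) := by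
    refine tendsto_nhdsWithin_iff.2 ⟨?_, ?_⟩
    · simpa using (tendsto_inv_atTop_zero.ofReal.add_const (I * t) : Tendsto _ atTop _)
    · filter_upwards [eventually_gt_atTop 0] with s hs
      have hre : 0 < (((s⁻¹ : ℝ) : ℂ) + I * t).re := by simpa using hs
      exact ⟨hre.le, fun h => hre.ne' (by rw [h, zero_re])⟩
  have hlim : Tendsto (fun s : ℝ => ∫ ξ : ℝ, cexp (-↑s⁻¹ * ↑‖ξ‖ ^ 2) • G ξ) atTop
      (𝓝 ((2 * π) ^ (-(1:ℝ)/2) • Φ (I * t))) := by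
    refine ((hΦ.tendsto.comp hb).const_smul _).congr' ?_
    filter_upwards [eventually_gt_atTop 0] with s hs
    rw [Function.comp_apply, ← integral_cexp_neg_mul_sq_mul_FT hf (by simpa using hs)]
    refine integral_congr_ae (ae_of_all _ fun ξ => ?_)
    have hξ : ((‖ξ‖ : ℝ) : ℂ) ^ 2 = (ξ : ℂ) ^ 2 := by norm_cast; simp
    simp only [G]
    rw [smul_eq_mul, hξ, neg_add, add_mul, Complex.exp_add, neg_mul (I * t)]
    ring
  show (2 * π) ^ (-(1:ℝ)/2) • ∫ ξ : ℝ, G ξ = _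
  rw [tendsto_nhds_unique (Real.tendsto_integral_cexp_sq_smul hG) hlim]

/-- The Bochner integral defining `schrod` takes its junk value `0` when `𝓕f ∉ L¹`. -/
lemma schrod_eq_zero_of_not_integrable {f : ℝ → ℂ} (hf : Integrable f)
    (hFf : ¬ Integrable (FT f)) (t : ℝ) : schrod t f = 0 := by
  ext x
  refine (congrArg _ (integral_undef fun hG => hFf ?_)).trans (smul_zero _)
  refine hG.congr' (continuous_FT hf).aestronglyMeasurable (ae_of_all _ fun ξ => ?_)
  simp [norm_exp, ← ofReal_pow]

lemma norm_integral_cexp_I_mul_add_mul_le {f : ℝ → ℂ} (hf : Integrable f) {φ ψ : ℝ → ℝ}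
    (hφ : Measurable φ) (hψ : Measurable ψ) :
    ‖∫ y, cexp (I * (φ y + ψ y : ℝ)) * f y‖
      ≤ ‖∫ y, cexp (I * φ y) * f y‖ + ∫ y, ‖cexp (I * ψ y) - 1‖ * ‖f y‖ := by
  have h1 : Integrable (fun y => cexp (I * φ y) * f y) :=
    hf.bdd_mul (by fun_prop) (ae_of_all _ fun y => (norm_exp_I_mul_ofReal _).le)
  have h2 : Integrable (fun y => cexp (I * φ y) * ((cexp (I * ψ y) - 1) * f y)) :=
    (hf.bdd_mul (by fun_prop) (ae_of_all _ fun y => by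
      simpa using norm_cexp_I_mul_sub_one_le_rpow le_rfl zero_le_one (ψ y))).bdd_mul
      (by fun_prop) (ae_of_all _ fun y => (norm_exp_I_mul_ofReal _).le)
  calc ‖∫ y, cexp (I * (φ y + ψ y : ℝ)) * f y‖
      = ‖(∫ y, cexp (I * φ y) * f y) + ∫ y, cexp (I * φ y) * ((cexp (I * ψ y) - 1) * f y)‖ := by
        rw [← integral_add h1 h2]
        congr 2 with y
        rw [ofReal_add, mul_add, Complex.exp_add]
        ring
    _ ≤ ‖∫ y, cexp (I * φ y) * f y‖ + ∫ y, ‖cexp (I * φ y) * ((cexp (I * ψ y) - 1) * f y)‖ :=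
        (norm_add_le _ _).trans (add_le_add le_rfl (norm_integral_le_integral_norm _))
    _ = _ := by simp only [norm_mul, norm_exp_I_mul_ofReal, one_mul]

lemma norm_integral_cexp_I_mul_affine_mul (f : ℝ → ℂ) (a ξ : ℝ) :
    ‖∫ y, cexp (I * (a + y * ξ : ℝ)) * f y‖ = ((2 * π) ^ (-(1:ℝ)/2))⁻¹ * ‖FT f ξ‖ := by
  have hc : 0 < (2 * π) ^ (-(1:ℝ)/2) := by positivity
  rw [FT_apply, norm_smul, Real.norm_of_nonneg hc.le, inv_mul_cancel_left₀ hc.ne']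
  simp_rw [ofReal_add, mul_add, Complex.exp_add, mul_assoc, integral_const_mul, norm_mul,
    norm_exp_I_mul_ofReal, one_mul, ofReal_mul]

lemma norm_integral_fresnel_le {f : ℝ → ℂ} (hf : Integrable f) {α : ℝ} (hα0 : 0 ≤ α)
    (hα1 : α ≤ 1) (hw : Integrable fun y => |y| ^ (2 * α) * ‖f y‖) {t : ℝ} (ht : 0 < t) (x : ℝ) :
    ‖∫ y : ℝ, cexp (-((y:ℂ) - x) ^ 2 / (4 * (I * t))) * f y‖
      ≤ ((2 * π) ^ (-(1:ℝ)/2))⁻¹ * ‖FT f (-(x / (2 * t)))‖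
        + 2 * (4 * t) ^ (-α) * ∫ y, |y| ^ (2 * α) * ‖f y‖ := by
  have hphase : ∀ y : ℝ, -((y:ℂ) - x) ^ 2 / (4 * (I * t))
      = I * ((x ^ 2 / (4 * t) + y * (-(x / (2 * t)))) + y ^ 2 / (4 * t) : ℝ) := by
    intro y
    have : (t : ℂ) ≠ 0 := ofReal_ne_zero.2 ht.ne'
    push_cast
    field_simp
    ring_nf
    rw [I_sq]
    ring
  have hψ : ∀ y : ℝ, ‖cexp (I * (y ^ 2 / (4 * t) : ℝ)) - 1‖ * ‖f y‖
      ≤ 2 * (4 * t) ^ (-α) * (|y| ^ (2 * α) * ‖f y‖) := by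
    intro y
    have hpow : |y ^ 2 / (4 * t)| ^ α = (4 * t) ^ (-α) * |y| ^ (2 * α) := by
      rw [abs_of_nonneg (by positivity), Real.div_rpow (by positivity) (by positivity),
        Real.rpow_neg (by positivity), ← sq_abs, ← Real.rpow_natCast_mul (abs_nonneg y),
        Nat.cast_ofNat]
      ring
    calc ‖cexp (I * (y ^ 2 / (4 * t) : ℝ)) - 1‖ * ‖f y‖
        ≤ 2 * |y ^ 2 / (4 * t)| ^ α * ‖f y‖ := by
          gcongr; exact norm_cexp_I_mul_sub_one_le_rpow hα0 hα1 _
      _ = _ := by rw [hpow]; ring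
  simp_rw [hphase]
  refine (norm_integral_cexp_I_mul_add_mul_le hf (by fun_prop) (by fun_prop)).trans ?_
  rw [norm_integral_cexp_I_mul_affine_mul, ← integral_const_mul]
  exact add_le_add le_rfl <| integral_mono_of_nonneg (ae_of_all _ fun y => by positivity)
    (hw.const_mul _) (ae_of_all _ hψ)

lemma norm_cpow_pi_div_I_mul {t : ℝ} (ht : 0 < t) :
    ‖((π : ℂ) / (I * t)) ^ (1/2 : ℂ)‖ = √π * t ^ (-(1:ℝ)/2) := by
  have hz : (π : ℂ) / (I * t) ≠ 0 := by simp [Real.pi_ne_zero, ht.ne']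
  rw [norm_cpow_of_ne_zero hz]
  simp only [one_div, inv_re, re_ofNat, normSq_ofNat, inv_im, im_ofNat, neg_zero, zero_div,
    mul_zero, Real.exp_zero, div_one, norm_div, norm_real, norm_mul, norm_I, one_mul,
    Real.norm_eq_abs, abs_of_pos ht, abs_of_pos Real.pi_pos]
  rw [Real.div_rpow Real.pi_pos.le ht.le, Real.sqrt_eq_rpow, neg_div, Real.rpow_neg ht.le,
    div_eq_mul_inv]
  norm_num

theorem exists_Lnorm_top_schrod_le {α : ℝ} (hα0 : 0 ≤ α) (hα : α < 1/4) :
    ∃ C > (0:ℝ), ∀ f : ℝ → ℂ, MemLp (fun x : ℝ => (√(1 + x ^ 2) : ℂ) * f x) 2 volume →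
      ∀ t > (0:ℝ), Lnorm ⊤ (schrod t f) ≤ C * t ^ (-(1:ℝ)/2) *
        (Lnorm ⊤ (FT f) + t ^ (-α) * Lnorm 2 (fun x : ℝ => (√(1 + x ^ 2) : ℂ) * f x)) := by
  set c : ℝ := (2 * π) ^ (-(1:ℝ)/2)
  set K : ℝ := (eLpNorm (fun y : ℝ => |y| ^ (2 * α) / √(1 + y ^ 2)) 2 volume).toReal
  have hc : 0 < c := by positivity
  refine ⟨c * √π * (1 + 2 * c * K), by positivity, fun f hF t ht => ?_⟩
  set M := Lnorm ⊤ (FT f)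
  set N := Lnorm 2 (fun x : ℝ => (√(1 + x ^ 2) : ℂ) * f x)
  have hf := integrable_of_memLp_sqrt_one_add_sq_mul hF
  have hW := integral_rpow_abs_mul_norm_le hF (a := 2 * α) (by positivity) (by linarith)
  have hM0 : 0 ≤ M := ENNReal.toReal_nonneg
  have hN0 : 0 ≤ N := ENNReal.toReal_nonneg
  have hK0 : 0 ≤ K := ENNReal.toReal_nonneg
  have h4t : (4 * t) ^ (-α) ≤ t ^ (-α) :=
    Real.rpow_le_rpow_of_nonpos ht (by linarith) (by linarith)
  refine Lnorm_top_le_of_forall_norm_le (by positivity) fun x => ?_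
  by_cases hFf : Integrable (FT f)
  swap
  · rw [schrod_eq_zero_of_not_integrable hf hFf, Pi.zero_apply, norm_zero]
    positivity
  rw [schrod_apply_eq_integral_fresnel hf hFf ht.ne' x, norm_smul, norm_smul, norm_mul,
    norm_cpow_pi_div_I_mul ht, Real.norm_of_nonneg hc.le]
  have hfresnel := norm_integral_fresnel_le hf hα0 (by linarith)
    (integrable_rpow_abs_mul_norm hF (by positivity) (by linarith)) ht x
  calc c * (c * (√π * t ^ (-(1:ℝ)/2) *
        ‖∫ y : ℝ, cexp (-((y:ℂ) - x) ^ 2 / (4 * (I * t))) * f y‖))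
      ≤ c * (c * (√π * t ^ (-(1:ℝ)/2) * (c⁻¹ * M + 2 * t ^ (-α) * (K * N)))) := by
        gcongr
        refine hfresnel.trans (add_le_add ?_ ?_)
        · exact mul_le_mul_of_nonneg_left (norm_FT_le_Lnorm_top hf _) (by positivity)
        · gcongr
    _ = c * √π * t ^ (-(1:ℝ)/2) * (M + 2 * c * K * (t ^ (-α) * N)) := by
        field_simp
    _ ≤ c * √π * t ^ (-(1:ℝ)/2) * ((1 + 2 * c * K) * (M + t ^ (-α) * N)) := by
        gcongr
        nlinarith [mul_nonneg (mul_nonneg hc.le hK0) hM0,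
          mul_nonneg (Real.rpow_nonneg ht.le (-α)) hN0]
    _ = c * √π * (1 + 2 * c * K) * t ^ (-(1:ℝ)/2) * (M + t ^ (-α) * N) := by ring

/-- Linear pointwise decay estimate:
`‖e^{itΔ}f‖_{L^∞} ≤ C t^{-1/2}(‖𝓕f‖_{L^∞} + t^{-1/20}‖⟨x⟩f‖_{L²})` for `t ≥ 1`. -/
theorem linear_pointwise_decay
    : ∃ C > (0:ℝ), ∀ f : ℝ → ℂ,
      MemLp (fun x : ℝ => (Real.sqrt (1 + x ^ 2) : ℂ) * f x) 2 (volume : Measure ℝ) →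
      ∀ t ≥ (1:ℝ),
        Lnorm ⊤ (schrod t f) ≤ C * t ^ (-(1:ℝ)/2) *
          (Lnorm ⊤ (FT f) +
            t ^ (-(1:ℝ)/20) * Lnorm 2 (fun x : ℝ => (Real.sqrt (1 + x ^ 2) : ℂ) * f x)) := by
  obtain ⟨C, hC, hdecay⟩ := exists_Lnorm_top_schrod_le (α := 1/20) (by norm_num) (by norm_num)
  refine ⟨C, hC, fun f hf t ht => ?_⟩
  simpa [neg_div] using hdecay f hf t (by linarith)

end
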